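/- Let γ : ℝ → ℂ be a C² immersed loop (γ twice continuously differentiable, γ(t+1) = γ(t), and deriv γ t ≠ 0 for all t), and let ξ ∈ ℂ with |ξ| = 1. Suppose the set Z = {t ∈ [0,1) : (deriv γ t)/‖deriv γ t‖ = ξ} is finite and for every t ∈ Z one has det(ξ, deriv (deriv γ) t) ≠ 0, where det(a,b) := a.re·b.im − a.im·b.re. Then ind(γ) = ∑_{t ∈ Z} sign(det(ξ, deriv (deriv γ) t)). -/

import Mathlib

/-!
Write `u = γ'`. Integrating the logarithmic derivative `u'/u` gives a branch `L` of
`log (u / u 0)`, so the Gauss map is `u/‖u‖ = (u 0/‖u 0‖) · exp (i · Im L)` and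
`θ = (Im L + arg (u 0/‖u 0‖) - arg ξ) / 2π` is a continuous lift of its angle to `ξ`, measured in
turns. The Gauss map equals `ξ` exactly where `θ` is an integer, and `θ (t + 1) = θ t + ind γ`.
At a transversal integer crossing the floor of `θ` jumps by the sign of `θ'`, which is the sign of
`det (ξ, γ'')`, and away from crossings it is constant; so over one period
`ind γ = ⌊θ (c + 1)⌋ - ⌊θ c⌋` is the signed number of crossings.
-/

open Set Filter Topology Complex
open scoped Real

theorem Real.sign_div_of_pos {c : ℝ} (hc : 0 < c) (x : ℝ) : Real.sign (x / c) = Real.sign x := by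
  rcases lt_trichotomy x 0 with hx | rfl | hx
  · rw [Real.sign_of_neg hx, Real.sign_of_neg (div_neg_of_neg_of_pos hx hc)]
  · rw [zero_div]
  · rw [Real.sign_of_pos hx, Real.sign_of_pos (div_pos hx hc)]

theorem floor_eq_floor_of_forall_ne_intCast {f : ℝ → ℝ} {a b : ℝ} (hab : a ≤ b)
    (hf : ContinuousOn f (Icc a b)) (hf_ne : ∀ t ∈ Icc a b, ∀ m : ℤ, f t ≠ m) :
    ⌊f b⌋ = ⌊f a⌋ := by
  have hivt := intermediate_value_uIcc (uIcc_of_le hab ▸ hf)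
  have key : ∀ x y : ℝ, ⌊x⌋ < ⌊y⌋ → (⌊y⌋ : ℝ) ∈ uIcc x y := fun x y h =>
    mem_uIcc_of_le (Int.floor_lt.mp h).le (Int.floor_le y)
  by_contra hne
  rcases lt_or_gt_of_ne hne with h | h
  · obtain ⟨t, ht, hft⟩ := hivt (uIcc_comm (f a) (f b) ▸ key _ _ h)
    exact hf_ne t (uIcc_of_le hab ▸ ht) _ hft
  · obtain ⟨t, ht, hft⟩ := hivt (key _ _ h)
    exact hf_ne t (uIcc_of_le hab ▸ ht) _ hft

theorem exists_floor_eq_of_hasDerivAt_pos {f : ℝ → ℝ} {L s a b : ℝ} {m : ℤ}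
    (hf : HasDerivAt f L s) (hL : 0 < L) (hs : f s = m) (ha : a < s) (hb : s < b) :
    ∃ t₁ ∈ Ioo a s, ∃ t₂ ∈ Ioo s b, ⌊f t₁⌋ = m - 1 ∧ ⌊f t₂⌋ = m := by
  obtain ⟨hleft, hright⟩ := hasDerivAt_iff_tendsto_slope_left_right.mp hf
  have hnear : ∀ᶠ t in 𝓝 s, f t ∈ Ioo ((m : ℝ) - 1) (m + 1) :=
    hf.continuousAt.eventually_mem (Ioo_mem_nhds (by linarith) (by linarith))
  have hIoo₁ : ∀ᶠ t in 𝓝[<] s, t ∈ Ioo a s := Ioo_mem_nhdsLT ha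
  have hIoo₂ : ∀ᶠ t in 𝓝[>] s, t ∈ Ioo s b := Ioo_mem_nhdsGT hb
  obtain ⟨t₁, ht₁, hslope₁, hnear₁⟩ :=
    (hIoo₁.and <| (hleft.eventually (lt_mem_nhds hL)).and (nhdsWithin_le_nhds hnear)).exists
  obtain ⟨t₂, ht₂, hslope₂, hnear₂⟩ :=
    (hIoo₂.and <| (hright.eventually (lt_mem_nhds hL)).and (nhdsWithin_le_nhds hnear)).exists
  have h₁ : f t₁ - f s = (t₁ - s) * slope f s t₁ := (sub_smul_slope f s t₁).symm
  have h₂ : f t₂ - f s = (t₂ - s) * slope f s t₂ := (sub_smul_slope f s t₂).symm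
  have hlt : f t₁ < m := by nlinarith [ht₁.2]
  have hgt : (m : ℝ) < f t₂ := by nlinarith [ht₂.1]
  refine ⟨t₁, ht₁, t₂, ht₂, ?_, ?_⟩ <;> rw [Int.floor_eq_iff] <;> push_cast <;>
    constructor <;> linarith [hnear₁.1, hnear₂.2]

theorem exists_floor_sub_floor_eq_sign {f : ℝ → ℝ} {L s a b : ℝ} {m : ℤ}
    (hf : HasDerivAt f L s) (hL : L ≠ 0) (hs : f s = m) (ha : a < s) (hb : s < b) :
    ∃ t₁ ∈ Ioo a s, ∃ t₂ ∈ Ioo s b, (⌊f t₂⌋ - ⌊f t₁⌋ : ℝ) = Real.sign L := by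
  rcases hL.lt_or_gt with hneg | hpos
  · -- reflect `t ↦ -t` to make the derivative positive
    have hrefl : HasDerivAt (fun t => f (0 - t)) (-L) (-s) := by
      apply HasDerivAt.comp_const_sub; simpa using hf
    obtain ⟨t₁, ht₁, t₂, ht₂, h₁, h₂⟩ := exists_floor_eq_of_hasDerivAt_pos hrefl (neg_pos.2 hneg)
      (by simpa using hs) (neg_lt_neg hb) (neg_lt_neg ha)
    refine ⟨-t₂, ⟨by linarith [ht₂.2], by linarith [ht₂.1]⟩, -t₁,
      ⟨by linarith [ht₁.2], by linarith [ht₁.1]⟩, ?_⟩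
    simp only [zero_sub] at h₁ h₂
    rw [h₁, h₂, Real.sign_of_neg hneg]
    push_cast; ring
  · obtain ⟨t₁, ht₁, t₂, ht₂, h₁, h₂⟩ := exists_floor_eq_of_hasDerivAt_pos hf hpos hs ha hb
    refine ⟨t₁, ht₁, t₂, ht₂, ?_⟩
    rw [h₁, h₂, Real.sign_of_pos hpos]
    push_cast; ring

theorem floor_sub_floor_eq_sum_sign {f d : ℝ → ℝ} {a b : ℝ} (T : Finset ℝ) (hab : a ≤ b)
    (hf : ContinuousOn f (Icc a b)) (hT : ∀ t ∈ Icc a b, (∃ m : ℤ, f t = m) ↔ t ∈ T)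
    (hTab : ↑T ⊆ Ioo a b) (hderiv : ∀ t ∈ T, HasDerivAt f (d t) t) (hd : ∀ t ∈ T, d t ≠ 0) :
    (⌊f b⌋ - ⌊f a⌋ : ℝ) = ∑ t ∈ T, Real.sign (d t) := by
  classical
  induction T using Finset.induction_on_max generalizing b with
  | empty =>
    rw [floor_eq_floor_of_forall_ne_intCast hab hf fun t ht m hm => by
      simpa using (hT t ht).1 ⟨m, hm⟩]
    simp
  | insert s T' hlt ih =>
    have hs : s ∈ Ioo a b := hTab (Finset.mem_insert_self s T')
    obtain ⟨m, hm⟩ := (hT s (Ioo_subset_Icc_self hs)).2 (Finset.mem_insert_self s T')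
    set a' := (insert a T').max' (Finset.insert_nonempty a T')
    have ha'_lt : a' < s := (Finset.max'_lt_iff _ _).2 <| by
      simpa [Finset.forall_mem_insert] using And.intro hs.1 hlt
    have hle_a' : ∀ x ∈ insert a T', x ≤ a' := fun x hx => Finset.le_max' _ x hx
    obtain ⟨t₁, ht₁, t₂, ht₂, hjump⟩ :=
      exists_floor_sub_floor_eq_sign (hderiv s (by simp)) (hd s (by simp)) hm ha'_lt hs.2
    have hat₁ : a ≤ t₁ := (hle_a' a (by simp)).trans ht₁.1.le
    have hleft := ih hat₁ (hf.mono (Icc_subset_Icc_right (by linarith [ht₁.2, hs.2])))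
      (fun t ht => by
        rw [hT t ⟨ht.1, by linarith [ht.2, ht₁.2, hs.2]⟩, Finset.mem_insert,
          or_iff_right (by linarith [ht.2, ht₁.2] : t ≠ s)])
      (fun x hx => ⟨(hTab (Finset.mem_insert_of_mem hx)).1,
        (hle_a' x (Finset.mem_insert_of_mem hx)).trans_lt ht₁.1⟩)
      (fun t ht => hderiv t (Finset.mem_insert_of_mem ht))
      (fun t ht => hd t (Finset.mem_insert_of_mem ht))
    have hright : ⌊f b⌋ = ⌊f t₂⌋ :=
      floor_eq_floor_of_forall_ne_intCast (by linarith [ht₂.2])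
        (hf.mono (Icc_subset_Icc_left (by linarith [ht₂.1, hs.1]))) fun t ht m' hm' => by
          rcases Finset.mem_insert.1 ((hT t ⟨by linarith [ht.1, ht₂.1, hs.1], ht.2⟩).1 ⟨m', hm'⟩)
            with rfl | ht'
          · linarith [ht.1, ht₂.1]
          · linarith [hlt t ht', ht.1, ht₂.1]
    rw [Finset.sum_insert fun h => (hlt s h).false, ← hleft, ← hjump, hright]
    ring

namespace Function.Periodic

theorem deriv {𝕜 F : Type*} [NontriviallyNormedField 𝕜] [NormedAddCommGroup F]
    [NormedSpace 𝕜 F] {f : 𝕜 → F} {p : 𝕜} (h : Periodic f p) : Periodic (deriv f) p :=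
  fun t => by rw [← deriv_comp_add_const, h.funext]

variable {α : Type*} [AddCommGroup α] [LinearOrder α] [IsOrderedAddMonoid α] [Archimedean α]
  {p : α}

theorem map_toIcoMod {β : Type*} {f : α → β} (h : Periodic f p) (hp : 0 < p) (a t : α) :
    f (toIcoMod hp a t) = f t := by
  rw [← self_sub_toIcoDiv_zsmul, h.sub_zsmul_eq]

theorem bijOn_toIcoMod {P : α → Prop} (hP : Periodic P p) (hp : 0 < p) (a b : α) :
    BijOn (toIcoMod hp b) {t ∈ Ico a (a + p) | P t} {t ∈ Ico b (b + p) | P t} := by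
  have hmaps : ∀ c d : α,
      MapsTo (toIcoMod hp d) {t ∈ Ico c (c + p) | P t} {t ∈ Ico d (d + p) | P t} :=
    fun c d t ht => ⟨toIcoMod_mem_Ico hp d t, (hP.map_toIcoMod hp d t).symm ▸ ht.2⟩
  refine InvOn.bijOn ⟨fun t ht => ?_, fun t ht => ?_⟩ (hmaps a b) (hmaps b a)
  · rw [toIcoMod_toIcoMod, toIcoMod_eq_self]; exact ht.1
  · rw [toIcoMod_toIcoMod, toIcoMod_eq_self]; exact ht.1

end Function.Periodic

theorem intCast_eq_sum_sign_deriv_of_add_period {θ d : ℝ → ℝ} {n : ℤ} {p : ℝ} (hp : 0 < p)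
    (hθ : ∀ t, HasDerivAt θ (d t) t) (hper : ∀ t, θ (t + p) = θ t + n) (Z : Finset ℝ)
    (hZ : ∀ t, t ∈ Z ↔ t ∈ Ico 0 p ∧ ∃ m : ℤ, θ t = m) (hd : ∀ t ∈ Z, d t ≠ 0) :
    (n : ℝ) = ∑ t ∈ Z, Real.sign (d t) := by
  classical
  have hdper : Function.Periodic d p := fun t =>
    ((hθ (t + p)).comp_add_const t p).unique (by simpa only [hper] using (hθ t).add_const (n : ℝ))
  have hint : Function.Periodic (fun t => ∃ m : ℤ, θ t = m) p := fun t => propext <| by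
    simp only [hper]
    exact ⟨fun ⟨m, hm⟩ => ⟨m - n, by push_cast; linarith⟩,
      fun ⟨m, hm⟩ => ⟨m + n, by push_cast; linarith⟩⟩
  -- count the crossings over a period `[c, c + p]` whose endpoints are not crossings
  obtain ⟨c, hcIco, hcZ⟩ := ((Ico_infinite hp).sdiff Z.finite_toSet).nonempty
  have hc : ¬ ∃ m : ℤ, θ c = m := fun h => hcZ ((hZ c).2 ⟨hcIco, h⟩)
  have hZset : (Z : Set ℝ) = {t ∈ Ico 0 (0 + p) | ∃ m : ℤ, θ t = m} := by
    rw [zero_add]; exact Set.ext hZ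
  have hbij := hZset ▸ hint.bijOn_toIcoMod hp 0 c
  set T := Z.image (toIcoMod hp c)
  have hT : ∀ t, t ∈ T ↔ t ∈ Ico c (c + p) ∧ ∃ m : ℤ, θ t = m := fun t => by
    rw [← Finset.mem_coe, Finset.coe_image, hbij.image_eq]; rfl
  have hcount := floor_sub_floor_eq_sum_sign (d := d) T (by linarith : c ≤ c + p)
    (HasDerivAt.continuousOn fun t _ => hθ t)
    (fun t ht => by
      rw [hT]
      refine ⟨fun h => ⟨⟨ht.1, ht.2.lt_of_ne ?_⟩, h⟩, And.right⟩
      rintro rfl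
      exact hc ((hint c).mp h))
    (fun t ht => ⟨((hT t).1 ht).1.1.lt_of_ne (by rintro rfl; exact hc ((hT c).1 ht).2),
      ((hT t).1 ht).1.2⟩)
    (fun t _ => hθ t)
    (fun t ht => by
      obtain ⟨s, hs, rfl⟩ := Finset.mem_image.1 ht
      rw [hdper.map_toIcoMod]
      exact hd s hs)
  rw [hper, Int.floor_add_intCast, Finset.sum_image hbij.injOn] at hcount
  simp only [hdper.map_toIcoMod] at hcount
  push_cast at hcount
  linarith

noncomputable def logLift (u : ℝ → ℂ) (t : ℝ) : ℂ := ∫ s in (0 : ℝ)..t, logDeriv u s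

section LogLift

variable {u : ℝ → ℂ} (hu : ContDiff ℝ 1 u) (hu0 : ∀ t, u t ≠ 0)
include hu hu0

theorem continuous_logDeriv_of_contDiff : Continuous (logDeriv u) :=
  (hu.continuous_deriv le_rfl).div hu.continuous hu0

theorem hasDerivAt_logLift (t : ℝ) : HasDerivAt (logLift u) (logDeriv u t) t :=
  ((continuous_logDeriv_of_contDiff hu hu0).integral_hasStrictDerivAt 0 t).hasDerivAt

theorem eq_mul_exp_logLift (t : ℝ) : u t = u 0 * exp (logLift u t) := by
  have hconst : ∀ s, HasDerivAt (fun s => u s * exp (-logLift u s)) 0 s := fun s => by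
    refine ((hu.differentiable one_ne_zero s).hasDerivAt.mul
      (hasDerivAt_logLift hu hu0 s).neg.cexp).congr_deriv ?_
    rw [logDeriv_apply]
    field_simp [hu0 s]
    ring
  have := is_const_of_deriv_eq_zero (fun s => (hconst s).differentiableAt)
    (fun s => (hconst s).deriv) t 0
  have hzero : logLift u 0 = 0 := intervalIntegral.integral_same
  rw [hzero, neg_zero, exp_zero, mul_one] at this
  rw [← this, mul_assoc, ← exp_add, neg_add_cancel, exp_zero, mul_one]

variable {p : ℝ} (hper : Function.Periodic u p)
include hper

theorem logLift_add_period (t : ℝ) : logLift u (t + p) = logLift u t + logLift u p := by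
  have hq := continuous_logDeriv_of_contDiff hu hu0
  have hqper : Function.Periodic (logDeriv u) p := fun t => by
    simp only [logDeriv_apply, hper.deriv t, hper t]
  rw [logLift, ← intervalIntegral.integral_add_adjacent_intervals (hq.intervalIntegrable 0 t)
    (hq.intervalIntegrable t (t + p)), hqper.intervalIntegral_add_eq t 0, zero_add]
  rfl

theorem exists_logLift_period_eq : ∃ n : ℤ, logLift u p = n * (2 * π * I) := by
  refine exp_eq_one_iff.1 (mul_left_cancel₀ (hu0 0) ?_)
  rw [mul_one, ← eq_mul_exp_logLift hu hu0, ← zero_add p, hper]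

end LogLift

theorem mul_exp_div_norm (v z : ℂ) : v * exp z / ‖v * exp z‖ = v / ‖v‖ * exp (z.im * I) := by
  have hz : exp z = exp z.re * exp (z.im * I) := by
    rw [← exp_add]; exact congrArg exp (re_add_im z).symm
  rw [norm_mul, norm_exp, hz, ← ofReal_exp]
  push_cast
  field_simp [(Real.exp_pos z.re).ne']

theorem mul_exp_mul_I_eq_iff {w ξ : ℂ} (hw : ‖w‖ = 1) (hξ : ‖ξ‖ = 1) (x : ℝ) :
    w * exp (x * I) = ξ ↔ ∃ m : ℤ, (x + arg w - arg ξ) / (2 * π) = m := by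
  have hpolar : ∀ z : ℂ, ‖z‖ = 1 → exp (arg z * I) = z := fun z hz => by
    simpa [hz] using norm_mul_exp_arg_mul_I z
  conv_lhs => rw [← hpolar w hw, ← hpolar ξ hξ, ← exp_add, exp_eq_exp_iff_exists_int]
  refine exists_congr fun m => ?_
  rw [div_eq_iff (by positivity), ← ofReal_inj]
  constructor <;> intro h
  · push_cast
    linear_combination -I * h + (x + arg w - arg ξ - m * (2 * π)) * I_sq
  · push_cast at h
    linear_combination I * h

theorem sign_im_div_eq_sign_det {v z ξ : ℂ} (hv : v ≠ 0) (hvξ : v / ‖v‖ = ξ) :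
    Real.sign (z / v).im = Real.sign (ξ.re * z.im - ξ.im * z.re) := by
  have hnorm : 0 < ‖v‖ := norm_pos_iff.2 hv
  have him : (z / v).im = (ξ.re * z.im - ξ.im * z.re) / ‖v‖ := by
    rw [← hvξ, div_im, normSq_eq_norm_sq]
    simp only [div_ofReal_re, div_ofReal_im]
    field_simp
  rw [him, Real.sign_div_of_pos hnorm]

noncomputable def gaussAngle (u : ℝ → ℂ) (ξ : ℂ) (t : ℝ) : ℝ :=
  ((logLift u t).im + arg (u 0 / ‖u 0‖) - arg ξ) / (2 * π)

section GaussAngle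

variable {u : ℝ → ℂ} (hu : ContDiff ℝ 1 u) (hu0 : ∀ t, u t ≠ 0)
include hu hu0

theorem hasDerivAt_gaussAngle (ξ : ℂ) (t : ℝ) :
    HasDerivAt (gaussAngle u ξ) ((logDeriv u t).im / (2 * π)) t :=
  (((imCLM.hasFDerivAt.comp_hasDerivAt t (hasDerivAt_logLift hu hu0 t)).add_const _).sub_const
    _).div_const _

theorem div_norm_eq_iff_exists_gaussAngle_eq {ξ : ℂ} (hξ : ‖ξ‖ = 1) (t : ℝ) :
    u t / ‖u t‖ = ξ ↔ ∃ m : ℤ, gaussAngle u ξ t = m := by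
  have hw : ‖u 0 / ‖u 0‖‖ = 1 := by simp [hu0 0]
  rw [eq_mul_exp_logLift hu hu0 t, mul_exp_div_norm]
  exact mul_exp_mul_I_eq_iff hw hξ _

theorem gaussAngle_add_period (ξ : ℂ) {p : ℝ} (hper : Function.Periodic u p) (t : ℝ) :
    gaussAngle u ξ (t + p) = gaussAngle u ξ t + (logLift u p).im / (2 * π) := by
  simp only [gaussAngle, logLift_add_period hu hu0 hper, add_im]
  ring

end GaussAngle

/-- The Whitney index of a `C²` immersed loop equals the signed number of preimages of
a regular value `ξ` of the Gauss map `t ↦ γ'(t)/‖γ'(t)‖`. -/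
theorem whitney_index_eq_gauss_preimages (γ : ℝ → ℂ) (hγ : ContDiff ℝ 2 γ)
    (hper : ∀ t, γ (t + 1) = γ t) (himm : ∀ t, deriv γ t ≠ 0)
    (ξ : ℂ) (hξ : ‖ξ‖ = 1)
    (hZ : {t ∈ Set.Ico (0:ℝ) 1 | deriv γ t / (‖deriv γ t‖ : ℂ) = ξ}.Finite)
    (hreg : ∀ t ∈ {t ∈ Set.Ico (0:ℝ) 1 | deriv γ t / (‖deriv γ t‖ : ℂ) = ξ},
      ξ.re * (deriv (deriv γ) t).im - ξ.im * (deriv (deriv γ) t).re ≠ 0) :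
    (1 / (2 * (Real.pi : ℂ) * Complex.I)) *
        (∫ t in (0:ℝ)..1, deriv (deriv γ) t / deriv γ t)
      = ((∑ t ∈ hZ.toFinset,
          Real.sign (ξ.re * (deriv (deriv γ) t).im - ξ.im * (deriv (deriv γ) t).re) : ℝ) : ℂ) := by
  have hu : ContDiff ℝ 1 (deriv γ) := hγ.deriv'
  have hper' : Function.Periodic (deriv γ) 1 := Function.Periodic.deriv hper
  obtain ⟨n, hn⟩ := exists_logLift_period_eq hu himm hper'
  have hindex : 1 / (2 * (π : ℂ) * I) * logLift (deriv γ) 1 = n := by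
    rw [hn]; field_simp
  have hsign : ∀ t ∈ hZ.toFinset, Real.sign ((logDeriv (deriv γ) t).im / (2 * π)) =
      Real.sign (ξ.re * (deriv (deriv γ) t).im - ξ.im * (deriv (deriv γ) t).re) := fun t ht => by
    rw [Real.sign_div_of_pos Real.two_pi_pos, logDeriv_apply]
    exact sign_im_div_eq_sign_det (himm t) ((hZ.mem_toFinset).1 ht).2
  have hdegree := intCast_eq_sum_sign_deriv_of_add_period (n := n) one_pos
    (hasDerivAt_gaussAngle hu himm ξ)
    (fun t => by rw [gaussAngle_add_period hu himm ξ hper', hn]; simp [Real.pi_ne_zero])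
    hZ.toFinset
    (fun t => by rw [hZ.mem_toFinset, ← div_norm_eq_iff_exists_gaussAngle_eq hu himm hξ]; rfl)
    (fun t ht h0 => hreg t ((hZ.mem_toFinset).1 ht) <| Real.sign_eq_zero_iff.1 <| by
      rw [← hsign t ht, h0, Real.sign_zero])
  rw [show (∫ t in (0:ℝ)..1, deriv (deriv γ) t / deriv γ t) = logLift (deriv γ) 1 from rfl,
    hindex, ← Finset.sum_congr rfl hsign, ← hdegree, Complex.ofReal_intCast]
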